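/- arXiv:1504.07138 — 2 statements merged into one kernel-verified Lean document; each statement's English description precedes it below -/
import Mathlib

section
/- Let Φ = {S_i(x,y) = (α_i x + t_{i,1}, β_i y + t_{i,2})}_{i=1}^m be a contracting diagonal affine IFS on the plane with S_i([0,1]²) ⊂ [0,1]², and let t_Φ be the unique root of the subadditive pressure function t ↦ P_Φ(t). Then for every ε > 0 there exists K = K(ε) such that for every k > K there is a homogeneous affine IFS Ψ_k ⊆ Φ^k (a subfamily of the k-th iterate in which all maps share the same linear part) such that |t_Φ − t_{Ψ_k}| < ε, where t_{Ψ_k} is the root of the subadditive pressure function of Ψ_k. -/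
open MeasureTheory Set Filter Metric
open scoped ENNReal

noncomputable section

/-- The contraction ratio (derivative) of the composition
`f_{w 1} ∘ ⋯ ∘ f_{w n}` of the similarities `f_i x = r i * x + t i`. -/
def wordRatio {ι : Type*} (r : ι → ℝ) {n : ℕ} (w : Fin n → ι) : ℝ :=
  ∏ k, r (w k)

/-- The value at `0` of the composition `f_{w 1} ∘ ⋯ ∘ f_{w n}` of the
similarities `f_i x = r i * x + t i`. -/
def wordFix {ι : Type*} (r t : ι → ℝ) {n : ℕ} (w : Fin n → ι) : ℝ :=
  ∑ k, (∏ l ∈ Finset.Iio k, r (w l)) * t (w k)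

/-- The Hochman condition for the IFS of similarities `{x ↦ r i * x + t i}` on `ℝ`:
there is `ε > 0` such that for every `n > 0` and distinct words `w₁ ≠ w₂` of length `n`,
either the derivatives of the compositions differ (`Δ = ∞`), or the values at `0`
are at distance `> ε ^ n`. -/
def HochmanCondition {ι : Type*} [Fintype ι] (r t : ι → ℝ) : Prop :=
  ∃ ε > (0 : ℝ), ∀ n : ℕ, 0 < n → ∀ w₁ w₂ : Fin n → ι, w₁ ≠ w₂ →
    wordRatio r w₁ = wordRatio r w₂ →
    ε ^ n < |wordFix r t w₁ - wordFix r t w₂|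

/-- The subadditive pressure function of a diagonal planar affine IFS with linear
parts `diag (a i, b i)`. -/
def pressureFn {ι : Type*} [Fintype ι] (a b : ι → ℝ) (s : ℝ) : ℝ :=
  if s < 1 then max (∑ i, |a i| ^ s) (∑ i, |b i| ^ s)
  else if s < 2 then max (∑ i, |a i| * |b i| ^ (s - 1)) (∑ i, |b i| * |a i| ^ (s - 1))
  else ∑ i, (|a i| * |b i|) ^ (s / 2)

/-! Split the words of length `k` into classes with equal ratio pairs. There are at most
`(k + 1) ^ m` classes, so some class `W` carries at least a `(k + 1) ^ (-m)` share of the pressure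
`P_{Φ^k}(t_Φ) = P_Φ(t_Φ) ^ k = 1`. Lowering the exponent by `δ` multiplies the pressure of `W` by at
least `ρ ^ (-k δ)`, `ρ` the largest ratio, which beats the polynomial loss for large `k`; the
intermediate value theorem then puts the root of the pressure of `W` in `[t_Φ - δ, t_Φ]`. -/

open Finset

section Pressure

variable {ι : Type*} [Fintype ι]

def potentialSum (a b : ι → ℝ) (p q : ℝ) : ℝ :=
  ∑ i, |a i| ^ p * |b i| ^ q

def pressureExponent (t : ℝ) : ℝ :=
  min t (max 1 (t / 2))

theorem monotone_pressureExponent : Monotone pressureExponent :=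
  fun _ _ h => min_le_min h (max_le_max le_rfl (by linarith))

theorem monotone_sub_pressureExponent : Monotone fun t => t - pressureExponent t := by
  intro s t h
  simp only [pressureExponent, min_def, max_def]
  split_ifs <;> linarith

theorem continuous_pressureExponent : Continuous pressureExponent := by
  unfold pressureExponent; fun_prop

/-- The three regimes of the subadditive pressure are one formula: a maximum of two potential
sums whose exponents `(e, t - e)` and `(t - e, e)` vary continuously and monotonically in `t`. -/
theorem pressureFn_eq_max (a b : ι → ℝ) (t : ℝ) :
    pressureFn a b t = max (potentialSum a b (pressureExponent t) (t - pressureExponent t))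
      (potentialSum a b (t - pressureExponent t) (pressureExponent t)) := by
  unfold pressureFn potentialSum
  split_ifs with h1 h2
  · rw [show pressureExponent t = t from min_eq_left (le_max_of_le_left h1.le), sub_self]
    simp only [Real.rpow_zero, mul_one, one_mul]
  · rw [show pressureExponent t = 1 by
      rw [pressureExponent, max_eq_left (by linarith), min_eq_right (not_lt.1 h1)]]
    simp only [Real.rpow_one, mul_comm (|b _|)]
  · rw [show pressureExponent t = t / 2 by
      rw [pressureExponent, max_eq_right (by linarith), min_eq_right (by linarith)],
      sub_half, max_self]
    simp only [Real.mul_rpow (abs_nonneg _) (abs_nonneg _)]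

theorem potentialSum_nonneg (a b : ι → ℝ) (p q : ℝ) : 0 ≤ potentialSum a b p q :=
  sum_nonneg fun _ _ => by positivity

theorem pressureFn_nonneg (a b : ι → ℝ) (t : ℝ) : 0 ≤ pressureFn a b t := by
  rw [pressureFn_eq_max]
  exact le_max_of_le_left (potentialSum_nonneg _ _ _ _)

theorem pressureFn_of_isEmpty [IsEmpty ι] (a b : ι → ℝ) (t : ℝ) : pressureFn a b t = 0 := by
  simp [pressureFn_eq_max, potentialSum]

theorem continuous_pressureFn {a b : ι → ℝ} (ha : ∀ i, a i ≠ 0) (hb : ∀ i, b i ≠ 0) :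
    Continuous (pressureFn a b) := by
  have hZ : ∀ {p q : ℝ → ℝ}, Continuous p → Continuous q →
      Continuous fun t => potentialSum a b (p t) (q t) := fun hp hq =>
    continuous_finsetSum _ fun i _ =>
      (continuous_const.rpow hp fun _ => Or.inl (abs_ne_zero.2 (ha i))).mul
        (continuous_const.rpow hq fun _ => Or.inl (abs_ne_zero.2 (hb i)))
  have he := continuous_pressureExponent
  simp only [funext (pressureFn_eq_max a b)]
  exact (hZ he (continuous_id.sub he)).max (hZ (continuous_id.sub he) he)

theorem potentialSum_wordRatio (a b : ι → ℝ) (n : ℕ) (p q : ℝ) :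
    potentialSum (fun w : Fin n → ι => wordRatio a w) (fun w => wordRatio b w) p q =
      potentialSum a b p q ^ n := by
  simp only [potentialSum, wordRatio, Fintype.sum_pow, abs_prod, prod_mul_distrib,
    Real.finsetProd_rpow _ _ (fun _ _ => abs_nonneg _)]

theorem pressureFn_wordRatio (a b : ι → ℝ) (n : ℕ) (t : ℝ) :
    pressureFn (fun w : Fin n → ι => wordRatio a w) (fun w => wordRatio b w) t =
      pressureFn a b t ^ n := by
  simp only [pressureFn_eq_max, potentialSum_wordRatio]
  exact (pow_left_monotoneOn.map_max (potentialSum_nonneg _ _ _ _)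
    (potentialSum_nonneg _ _ _ _)).symm

theorem pressureFn_subtype_le (s : Finset ι) (a b : ι → ℝ) (t : ℝ) :
    pressureFn (s.restrict a) (s.restrict b) t ≤ pressureFn a b t := by
  have hZ : ∀ p q, potentialSum (s.restrict a) (s.restrict b) p q ≤ potentialSum a b p q :=
    fun p q => (sum_coe_sort s fun i => |a i| ^ p * |b i| ^ q).trans_le
      (sum_le_univ_sum_of_nonneg fun _ => by positivity)
  simp only [pressureFn_eq_max]
  exact max_le_max (hZ _ _) (hZ _ _)

theorem pressureFn_le_sum_fiber {κ : Type*} [DecidableEq κ] (f : ι → κ) (a b : ι → ℝ) (t : ℝ) :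
    pressureFn a b t ≤ ∑ v ∈ Finset.univ.image f,
      pressureFn (({i | f i = v} : Finset ι).restrict a)
        (({i | f i = v} : Finset ι).restrict b) t := by
  have hsplit : ∀ p q, potentialSum a b p q = ∑ v ∈ Finset.univ.image f,
      potentialSum (({i | f i = v} : Finset ι).restrict a)
        (({i | f i = v} : Finset ι).restrict b) p q :=
    fun p q => by
      rw [potentialSum, ← sum_fiberwise_of_maps_to fun i _ => mem_image_of_mem f (mem_univ i)]
      exact sum_congr rfl fun v _ => (sum_coe_sort _ fun i => |a i| ^ p * |b i| ^ q).symm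
  rw [pressureFn_eq_max, hsplit, hsplit]
  simp only [pressureFn_eq_max]
  exact max_le (sum_le_sum fun _ _ => le_max_left _ _) (sum_le_sum fun _ _ => le_max_right _ _)

theorem exists_pressureFn_le_card_mul_fiber [Nonempty ι] {κ : Type*} [DecidableEq κ] (f : ι → κ)
    (a b : ι → ℝ) (t : ℝ) : ∃ v ∈ Finset.univ.image f, pressureFn a b t ≤
      #(Finset.univ.image f) * pressureFn (({i | f i = v} : Finset ι).restrict a)
        (({i | f i = v} : Finset ι).restrict b) t := by
  refine exists_le_of_sum_le (univ_nonempty.image f) ?_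
  rw [sum_const, nsmul_eq_mul, ← mul_sum]
  exact mul_le_mul_of_nonneg_left (pressureFn_le_sum_fiber f a b t) (Nat.cast_nonneg _)

theorem potentialSum_le_mul_rpow {a b : ι → ℝ} {r : ℝ} (ha : ∀ i, a i ≠ 0) (hb : ∀ i, b i ≠ 0)
    (har : ∀ i, |a i| ≤ r) (hbr : ∀ i, |b i| ≤ r) {p q p' q' : ℝ} (hp : p' ≤ p) (hq : q' ≤ q) :
    potentialSum a b p q ≤ potentialSum a b p' q' * r ^ ((p - p') + (q - q')) := by
  rw [potentialSum, potentialSum, sum_mul]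
  refine sum_le_sum fun i _ => ?_
  have hai := abs_pos.2 (ha i)
  have hbi := abs_pos.2 (hb i)
  have hr : 0 < r := hai.trans_le (har i)
  calc |a i| ^ p * |b i| ^ q
      = |a i| ^ p' * |b i| ^ q' * (|a i| ^ (p - p') * |b i| ^ (q - q')) := by
        rw [mul_mul_mul_comm, ← Real.rpow_add hai, ← Real.rpow_add hbi, add_sub_cancel,
          add_sub_cancel]
    _ ≤ |a i| ^ p' * |b i| ^ q' * (r ^ (p - p') * r ^ (q - q')) := by
        gcongr
        · exact har i
        · exact hbr i
    _ = |a i| ^ p' * |b i| ^ q' * r ^ ((p - p') + (q - q')) := by rw [Real.rpow_add hr]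

theorem pressureFn_le_mul_rpow_sub {a b : ι → ℝ} {r : ℝ} (ha : ∀ i, a i ≠ 0) (hb : ∀ i, b i ≠ 0)
    (hr : 0 ≤ r) (har : ∀ i, |a i| ≤ r) (hbr : ∀ i, |b i| ≤ r) {s t : ℝ} (hst : s ≤ t) :
    pressureFn a b t ≤ pressureFn a b s * r ^ (t - s) := by
  have he := monotone_pressureExponent hst
  have he' : s - pressureExponent s ≤ t - pressureExponent t := monotone_sub_pressureExponent hst
  rw [pressureFn_eq_max, pressureFn_eq_max, max_mul_of_nonneg _ _ (Real.rpow_nonneg hr _)]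
  refine max_le_max ((potentialSum_le_mul_rpow ha hb har hbr he he').trans_eq ?_)
    ((potentialSum_le_mul_rpow ha hb har hbr he' he).trans_eq ?_) <;> ring_nf

end Pressure

section Words

variable {ι : Type*}

theorem wordRatio_ne_zero {a : ι → ℝ} (ha : ∀ i, a i ≠ 0) {n : ℕ} (w : Fin n → ι) :
    wordRatio a w ≠ 0 :=
  prod_ne_zero_iff.2 fun l _ => ha (w l)

theorem abs_wordRatio_le_pow {a : ι → ℝ} {r : ℝ} (har : ∀ i, |a i| ≤ r) {n : ℕ}
    (w : Fin n → ι) : |wordRatio a w| ≤ r ^ n := by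
  rw [wordRatio, abs_prod]
  exact (prod_le_prod (fun l _ => abs_nonneg (a (w l))) fun l _ => har (w l)).trans_eq (by simp)

theorem wordRatio_eq_prod_pow_card [Fintype ι] [DecidableEq ι] (a : ι → ℝ) {n : ℕ}
    (w : Fin n → ι) :
    wordRatio a w = ∏ i, a i ^ #{l | w l = i} := by
  rw [wordRatio, ← prod_fiberwise Finset.univ w]
  exact prod_congr rfl fun i _ => prod_eq_pow_card fun l hl => congrArg a (mem_filter.1 hl).2

/-- A word's ratios depend only on its letter counts, which range over `{0, …, n}^ι`. -/
theorem card_image_wordRatio_le [Fintype ι] [DecidableEq ι] (a b : ι → ℝ) (n : ℕ) :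
    #(Finset.univ.image fun w : Fin n → ι => (wordRatio a w, wordRatio b w)) ≤
      (n + 1) ^ Fintype.card ι := by
  let ratios (c : ι → ℕ) : ℝ × ℝ := (∏ i, a i ^ c i, ∏ i, b i ^ c i)
  calc _ ≤ #((Fintype.piFinset fun _ : ι => range (n + 1)).image ratios) := by
        refine card_le_card fun x hx => ?_
        obtain ⟨w, -, rfl⟩ := mem_image.1 hx
        refine mem_image.2 ⟨fun i => #{l | w l = i}, ?_, ?_⟩
        · simp only [Fintype.mem_piFinset, Finset.mem_range, Nat.lt_succ_iff]
          exact fun i => (card_filter_le _ _).trans_eq (card_fin n)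
        · simp only [ratios, wordRatio_eq_prod_pow_card]
    _ ≤ (n + 1) ^ Fintype.card ι := card_image_le.trans (by simp)

end Words

theorem eventually_add_one_pow_mul_pow_le_one (m : ℕ) {c : ℝ} (hc₀ : 0 < c) (hc₁ : c < 1) :
    ∀ᶠ n : ℕ in atTop, ((n : ℝ) + 1) ^ m * c ^ n ≤ 1 := by
  have h := ((tendsto_pow_const_mul_const_pow_of_abs_lt_one m
    (abs_lt.2 ⟨by linarith, hc₁⟩)).comp (tendsto_add_atTop_nat 1)).div_const c
  rw [zero_div] at h
  filter_upwards [h.eventually_le_const one_pos] with n hn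
  simpa [pow_succ, mul_div_assoc, hc₀.ne'] using hn

theorem exists_pos_lt_one_forall_le {ι : Type*} [Finite ι] (f : ι → ℝ) (hf : ∀ i, f i < 1) :
    ∃ ρ, 0 < ρ ∧ ρ < 1 ∧ ∀ i, f i ≤ ρ := by
  rcases isEmpty_or_nonempty ι with hι | hι
  · exact ⟨1 / 2, by norm_num, by norm_num, isEmptyElim⟩
  · obtain ⟨i₀, hi₀⟩ := Finite.exists_max f
    exact ⟨max (f i₀) (1 / 2), by positivity, max_lt (hf i₀) (by norm_num),
      fun i => le_max_of_le_left (hi₀ i)⟩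

theorem exists_homogeneous_subsystem_pressureFn_bounds {ι : Type*} [Fintype ι] [DecidableEq ι]
    [Nonempty ι] {a b : ι → ℝ} {ρ : ℝ} (ha : ∀ i, a i ≠ 0) (hb : ∀ i, b i ≠ 0)
    (haρ : ∀ i, |a i| ≤ ρ) (hbρ : ∀ i, |b i| ≤ ρ) (k : ℕ) (t : ℝ) {δ : ℝ} (hδ : 0 ≤ δ) :
    ∃ W : Finset (Fin k → ι), W.Nonempty ∧
      (∀ w₁ ∈ W, ∀ w₂ ∈ W, wordRatio a w₁ = wordRatio a w₂ ∧ wordRatio b w₁ = wordRatio b w₂) ∧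
      pressureFn (W.restrict (wordRatio a)) (W.restrict (wordRatio b)) t ≤ pressureFn a b t ^ k ∧
      pressureFn a b t ^ k ≤ ((k + 1) ^ Fintype.card ι * (ρ ^ δ) ^ k) *
        pressureFn (W.restrict (wordRatio a)) (W.restrict (wordRatio b)) (t - δ) := by
  have hρ : 0 ≤ ρ := (abs_nonneg _).trans (haρ (Classical.arbitrary ι))
  obtain ⟨v, hv, hPv⟩ := exists_pressureFn_le_card_mul_fiber
    (fun w : Fin k → ι => (wordRatio a w, wordRatio b w)) (wordRatio a) (wordRatio b) t
  set W : Finset (Fin k → ι) := {w | (wordRatio a w, wordRatio b w) = v}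
  set P := pressureFn (W.restrict (wordRatio a)) (W.restrict (wordRatio b))
  refine ⟨W, ?_, fun w₁ h₁ w₂ h₂ => ?_, ?_, ?_⟩
  · obtain ⟨w, -, rfl⟩ := mem_image.1 hv
    exact ⟨w, by simp [W]⟩
  · exact Prod.ext_iff.1 ((mem_filter.1 h₁).2.trans (mem_filter.1 h₂).2.symm)
  · exact (pressureFn_subtype_le W _ _ t).trans (pressureFn_wordRatio a b k t).le
  · calc pressureFn a b t ^ k
        = pressureFn (wordRatio a) (wordRatio b) t := (pressureFn_wordRatio a b k t).symm
      _ ≤ #(Finset.univ.image fun w : Fin k → ι => (wordRatio a w, wordRatio b w)) * P t := hPv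
      _ ≤ _ * (P (t - δ) * (ρ ^ k) ^ (t - (t - δ))) := by
        gcongr
        exact pressureFn_le_mul_rpow_sub (fun w => wordRatio_ne_zero ha _)
          (fun w => wordRatio_ne_zero hb _) (pow_nonneg hρ k)
          (fun w => abs_wordRatio_le_pow haρ _) (fun w => abs_wordRatio_le_pow hbρ _)
          (by linarith)
      _ = _ * (ρ ^ δ) ^ k * P (t - δ) := by
        rw [sub_sub_cancel, ← Real.rpow_pow_comm hρ]
        ring
      _ ≤ ((k + 1) ^ Fintype.card ι * (ρ ^ δ) ^ k) * P (t - δ) := by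
        gcongr
        · exact pressureFn_nonneg _ _ _
        · exact_mod_cast card_image_wordRatio_le a b k

theorem pressure_root_approximation_general
    (m : ℕ) (α β : Fin m → ℝ)
    (hα : ∀ i, α i ≠ 0 ∧ |α i| < 1) (hβ : ∀ i, β i ≠ 0 ∧ |β i| < 1)
    (tΦ : ℝ) (htΦ : pressureFn α β tΦ = 1) :
    ∀ ε > (0 : ℝ), ∃ K : ℕ, ∀ k : ℕ, K < k →
      ∃ W : Finset (Fin k → Fin m), W.Nonempty ∧
        -- `Ψ_k = {S_{w 1} ∘ ⋯ ∘ S_{w k} : w ∈ W}` is homogeneous: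
        (∀ w₁ ∈ W, ∀ w₂ ∈ W,
          wordRatio α w₁ = wordRatio α w₂ ∧ wordRatio β w₁ = wordRatio β w₂) ∧
        -- the root of the subadditive pressure of `Ψ_k` is `ε`-close to `t_Φ`:
        ∃ tΨ : ℝ,
          pressureFn (fun w : W => wordRatio α (w : Fin k → Fin m))
            (fun w : W => wordRatio β (w : Fin k → Fin m)) tΨ = 1 ∧
          |tΦ - tΨ| < ε := by
  intro ε hε
  have : Nonempty (Fin m) := by
    by_contra h
    have := not_nonempty_iff.1 h
    simp [pressureFn_of_isEmpty] at htΦ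
  obtain ⟨ρ, hρ₀, hρ₁, hρ⟩ := exists_pos_lt_one_forall_le (fun i => max |α i| |β i|)
    fun i => max_lt (hα i).2 (hβ i).2
  obtain ⟨δ, hδ₀, hδε⟩ : ∃ δ, 0 < δ ∧ δ < ε := ⟨ε / 2, half_pos hε, half_lt_self hε⟩
  obtain ⟨K, hK⟩ := eventually_atTop.1 (eventually_add_one_pow_mul_pow_le_one m
    (Real.rpow_pos_of_pos hρ₀ δ) (Real.rpow_lt_one hρ₀.le hρ₁ hδ₀))
  refine ⟨K, fun k hk => ?_⟩
  obtain ⟨W, hWne, hWhom, hupper, hlower⟩ := exists_homogeneous_subsystem_pressureFn_bounds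
    (fun i => (hα i).1) (fun i => (hβ i).1) (fun i => (le_max_left _ _).trans (hρ i))
    (fun i => (le_max_right _ _).trans (hρ i)) k tΦ hδ₀.le
  rw [htΦ, one_pow] at hupper hlower
  rw [Fintype.card_fin] at hlower
  have hcont := continuous_pressureFn (fun w : W => wordRatio_ne_zero (fun i => (hα i).1) w.1)
    (fun w : W => wordRatio_ne_zero (fun i => (hβ i).1) w.1)
  obtain ⟨tΨ, ⟨hlo, hhi⟩, hroot⟩ := intermediate_value_Icc' (by linarith : tΦ - δ ≤ tΦ)
    hcont.continuousOn ⟨hupper, hlower.trans (mul_le_of_le_one_left (pressureFn_nonneg _ _ _)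
      (hK k hk.le))⟩
  exact ⟨W, hWne, hWhom, tΨ, hroot, by rw [abs_of_nonneg (by linarith)]; linarith⟩

/-- **Lemma 5.2** (Bárány–Rams–Simon).
Let `Φ` be a contracting diagonal planar affine IFS mapping `[0,1]²` into itself and
let `t_Φ` be the root of its subadditive pressure function. For every `ε > 0` there is
`K = K(ε)` such that for every `k > K` there is a homogeneous subsystem `Ψ_k ⊆ Φ^k`
(all maps having the same contraction ratios in both coordinates) whose pressure root
`t_{Ψ_k}` satisfies `|t_Φ - t_{Ψ_k}| < ε`. -/
theorem pressure_root_approximation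
    (m : ℕ) (α β t1 t2 : Fin m → ℝ)
    (hα : ∀ i, α i ≠ 0 ∧ |α i| < 1) (hβ : ∀ i, β i ≠ 0 ∧ |β i| < 1)
    (S : Fin m → ℝ × ℝ → ℝ × ℝ)
    (hSdef : ∀ i q, S i q = (α i * q.1 + t1 i, β i * q.2 + t2 i))
    (hcube : ∀ i, S i '' Set.Icc ((0, 0) : ℝ × ℝ) (1, 1) ⊆ Set.Icc ((0, 0) : ℝ × ℝ) (1, 1))
    (tΦ : ℝ) (htΦ : pressureFn α β tΦ = 1) :
    ∀ ε > (0 : ℝ), ∃ K : ℕ, ∀ k : ℕ, K < k →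
      ∃ W : Finset (Fin k → Fin m), W.Nonempty ∧
        -- `Ψ_k = {S_{w 1} ∘ ⋯ ∘ S_{w k} : w ∈ W}` is homogeneous:
        (∀ w₁ ∈ W, ∀ w₂ ∈ W,
          wordRatio α w₁ = wordRatio α w₂ ∧ wordRatio β w₁ = wordRatio β w₂) ∧
        -- the root of the subadditive pressure of `Ψ_k` is `ε`-close to `t_Φ`:
        ∃ tΨ : ℝ,
          pressureFn (fun w : W => wordRatio α (w : Fin k → Fin m))
            (fun w : W => wordRatio β (w : Fin k → Fin m)) tΨ = 1 ∧
          |tΦ - tΨ| < ε :=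
  pressure_root_approximation_general m α β hα hβ tΦ htΦ

end
end

section
/- Let α_1,…,α_m, β_1,…,β_m ∈ (−1,1)\{0}, let s_α, s_β be the unique solutions of Σ|α_i|^{s_α} = 1 and Σ|β_i|^{s_β} = 1, and suppose s_β ≤ 1 < s_α. Let d ∈ (1,2] be the unique solution of Σ_{i=1}^m |α_i||β_i|^{d−1} = 1 and define the probability vector p_i = |α_i||β_i|^{d−1}. Then the Lyapunov exponents χ_α = −Σ p_i log|α_i| and χ_β = −Σ p_i log|β_i| satisfy χ_α ≤ χ_β. -/
open MeasureTheory Set Filter Metric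
open scoped ENNReal

noncomputable section

/-- **Ordering of Lyapunov exponents in the proof of Theorem B(2)**
(Bárány–Rams–Simon). If `sβ ≤ 1 < sα`, `d ∈ (1,2]` solves
`∑ |α i| * |β i| ^ (d-1) = 1` and `p i = |α i| * |β i| ^ (d-1)`, then the Lyapunov
exponents satisfy `χα ≤ χβ`. -/
theorem lyapunov_exponents_ordered
    (m : ℕ) (α β : Fin m → ℝ)
    (hα : ∀ i, α i ≠ 0 ∧ |α i| < 1) (hβ : ∀ i, β i ≠ 0 ∧ |β i| < 1)
    (sα sβ : ℝ)
    (hsα : ∑ i, |α i| ^ sα = 1) (hsβ : ∑ i, |β i| ^ sβ = 1)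
    (hreg₁ : sβ ≤ 1) (hreg₂ : 1 < sα)
    (d : ℝ) (hd₁ : 1 < d) (hd₂ : d ≤ 2)
    (hd : ∑ i, |α i| * |β i| ^ (d - 1) = 1)
    (p : Fin m → ℝ) (hp : ∀ i, p i = |α i| * |β i| ^ (d - 1)) :
    -∑ i, p i * Real.log |α i| ≤ -∑ i, p i * Real.log |β i| := by
  have hβpos : ∀ i, 0 < |β i| := fun i => abs_pos.2 (hβ i).1
  have hαpos : ∀ i, 0 < |α i| := fun i => abs_pos.2 (hα i).1
  set q : Fin m → ℝ := fun i => |β i| ^ sβ with hqdef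
  have hppos : ∀ i, 0 < p i := fun i => by
    rw [hp]
    exact mul_pos (hαpos i) (Real.rpow_pos_of_pos (hβpos i) _)
  have hqpos : ∀ i, 0 < q i := fun i => Real.rpow_pos_of_pos (hβpos i) _
  have hsump : ∑ i, p i = 1 := by
    rw [show (∑ i, p i) = ∑ i, |α i| * |β i| ^ (d - 1) from
      Finset.sum_congr rfl fun i _ => hp i]
    exact hd
  have hsumq : ∑ i, q i = 1 := hsβ
  -- Gibbs' inequality
  have gibbs : ∑ i, p i * Real.log (q i) - ∑ i, p i * Real.log (p i) ≤ 0 := by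
    rw [← Finset.sum_sub_distrib]
    calc ∑ i, (p i * Real.log (q i) - p i * Real.log (p i))
        ≤ ∑ i, (q i - p i) := by
          refine Finset.sum_le_sum fun i _ => ?_
          have h1 := Real.log_le_sub_one_of_pos
            (show 0 < q i / p i from div_pos (hqpos i) (hppos i))
          rw [Real.log_div (hqpos i).ne' (hppos i).ne'] at h1
          have h2 := mul_le_mul_of_nonneg_left h1 (hppos i).le
          calc p i * Real.log (q i) - p i * Real.log (p i)
              = p i * (Real.log (q i) - Real.log (p i)) := by ring
            _ ≤ p i * (q i / p i - 1) := h2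
            _ = q i - p i := by rw [mul_sub, mul_div_cancel₀ _ (hppos i).ne', mul_one]
      _ = 0 := by rw [Finset.sum_sub_distrib, hsump, hsumq]; ring
  have hlogq : ∀ i, Real.log (q i) = sβ * Real.log |β i| := fun i =>
    Real.log_rpow (hβpos i) _
  have hlogp : ∀ i, Real.log (p i) = Real.log |α i| + (d - 1) * Real.log |β i| := by
    intro i
    rw [hp, Real.log_mul (hαpos i).ne' (Real.rpow_pos_of_pos (hβpos i) _).ne',
      Real.log_rpow (hβpos i)]
  set A := ∑ i, p i * Real.log |α i| with hA
  set B := ∑ i, p i * Real.log |β i| with hB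
  have hsum1 : ∑ i, p i * Real.log (q i) = sβ * B := by
    rw [hB, Finset.mul_sum]
    exact Finset.sum_congr rfl fun i _ => by rw [hlogq i]; ring
  have hsum2 : ∑ i, p i * Real.log (p i) = A + (d - 1) * B := by
    rw [hA, hB, Finset.mul_sum, ← Finset.sum_add_distrib]
    exact Finset.sum_congr rfl fun i _ => by rw [hlogp i]; ring
  rw [hsum1, hsum2] at gibbs
  have hBneg : B ≤ 0 := by
    apply Finset.sum_nonpos
    intro i _
    exact mul_nonpos_of_nonneg_of_nonpos (hppos i).le
      (Real.log_nonpos (abs_nonneg _) (hβ i).2.le)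
  nlinarith [gibbs, hBneg, hd₁, hreg₁]
end
end
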